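/- Let n ≥ 2 and 0 < σ < 1/2. There exist constants c, C > 0 depending only on n such that for all 0 < δ < 1 with δ^σ ≤ 1/2, δ^{1-σ} ≤ 1/40 and δ^{1-2σ} ≤ 1/80, the Lebesgue measure of Ω satisfies c δ^{(σ-1)(n-1) + 2σ - 1} ≤ |Ω| ≤ C δ^{(σ-1)(n-1) + 2σ - 1}. -/

import Mathlib

/-!
The points of `Λ` form a rectangular grid with all spacings at least `2`, so the open unit balls
around them are pairwise disjoint; hence `|Ω|` lies between `#Λ · |B(0,1)|` and
`#Λ · |B̄(0,1)|`. The grid has `⌊A⌋ + 1` points in each of the first `n - 1` directions and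
`⌊B⌋ + 1` in the last, where `A = δ^{σ-1}/40 ≥ 1` and `B = δ^{2σ-1}/80 ≥ 1`. Since
`x ≤ ⌊x⌋ + 1 ≤ 2x` for `x ≥ 1`, `#Λ` is comparable to
`A^{n-1} B = 40^{1-n} 80^{-1} δ^{(σ-1)(n-1)+2σ-1}`.
-/

open Real MeasureTheory Metric

section SeparatedBalls

variable {E ι : Type*} [NormedAddCommGroup E] [MeasurableSpace E] [BorelSpace E]
  (μ : Measure E) [μ.IsAddHaarMeasure] (s : Finset ι) (x : ι → E)

theorem measure_biUnion_closedBall_le_card_mul (r : ℝ) :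
    μ (⋃ i ∈ s, closedBall (x i) r) ≤ s.card * μ (closedBall 0 r) :=
  calc μ (⋃ i ∈ s, closedBall (x i) r) ≤ ∑ i ∈ s, μ (closedBall (x i) r) :=
        measure_biUnion_finset_le s _
    _ = s.card * μ (closedBall 0 r) := by
        simp only [Measure.addHaar_closedBall_center, Finset.sum_const, nsmul_eq_mul]

theorem card_mul_le_measure_biUnion_closedBall {r : ℝ}
    (hx : (s : Set ι).Pairwise fun i j => 2 * r ≤ dist (x i) (x j)) :
    s.card * μ (ball 0 r) ≤ μ (⋃ i ∈ s, closedBall (x i) r) := by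
  have hdisj : (s : Set ι).PairwiseDisjoint fun i => ball (x i) r :=
    fun i hi j hj hij => ball_disjoint_ball (by linarith [hx hi hj hij])
  calc (s.card : ENNReal) * μ (ball 0 r) = ∑ i ∈ s, μ (ball (x i) r) := by
        simp only [Measure.addHaar_ball_center, Finset.sum_const, nsmul_eq_mul]
    _ = μ (⋃ i ∈ s, ball (x i) r) :=
        (measure_biUnion_finset hdisj fun _ _ => measurableSet_ball).symm
    _ ≤ μ (⋃ i ∈ s, closedBall (x i) r) :=
        measure_mono (Set.iUnion₂_mono fun _ _ => ball_subset_closedBall)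

end SeparatedBalls

theorem Nat.floor_add_one_le_two_mul {x : ℝ} (hx : 1 ≤ x) : (⌊x⌋₊ : ℝ) + 1 ≤ 2 * x := by
  linarith [Nat.floor_le (zero_le_one.trans hx)]

theorem Finset.prod_le_prod_floor_add_one {ι : Type*} (s : Finset ι) {L : ι → ℝ}
    (hL : ∀ i ∈ s, 0 ≤ L i) : ∏ i ∈ s, L i ≤ ∏ i ∈ s, ((⌊L i⌋₊ : ℝ) + 1) :=
  Finset.prod_le_prod hL fun _ _ => (Nat.lt_floor_add_one _).le

theorem Finset.prod_floor_add_one_le {ι : Type*} (s : Finset ι) {L : ι → ℝ}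
    (hL : ∀ i ∈ s, 1 ≤ L i) : ∏ i ∈ s, ((⌊L i⌋₊ : ℝ) + 1) ≤ 2 ^ s.card * ∏ i ∈ s, L i := by
  rw [← Finset.prod_const, ← Finset.prod_mul_distrib]
  exact Finset.prod_le_prod (fun _ _ => by positivity)
    fun i hi => Nat.floor_add_one_le_two_mul (hL i hi)

theorem Fin.prod_ite_val_lt_sub_one {M : Type*} [CommMonoid M] {n : ℕ} (hn : 0 < n) (a b : M) :
    ∏ j : Fin n, (if (j : ℕ) < n - 1 then a else b) = a ^ (n - 1) * b := by
  obtain ⟨m, rfl⟩ := Nat.exists_eq_add_one_of_ne_zero hn.ne'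
  simp [Fin.prod_univ_castSucc]

theorem Fin.forall_iff_val_lt_sub_one_and {n : ℕ} (hn : 0 < n) {P : Fin n → Prop} :
    (∀ j, P j) ↔ (∀ j : Fin n, (j : ℕ) < n - 1 → P j) ∧ P ⟨n - 1, by omega⟩ := by
  refine ⟨fun h => ⟨fun j _ => h j, h _⟩, fun ⟨hlt, hlast⟩ j => ?_⟩
  by_cases hj : (j : ℕ) < n - 1
  · exact hlt j hj
  · have hj_last : j = ⟨n - 1, by omega⟩ := Fin.ext (by have := j.isLt; simp only; omega)
    exact hj_last ▸ hlast

section Grid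

variable {n : ℕ}

def grid (h L : Fin n → ℝ) : Set (EuclideanSpace ℝ (Fin n)) :=
  {z | ∀ j, ∃ p : ℕ, (p : ℝ) ≤ L j ∧ z j = p * h j}

def gridPoint (h : Fin n → ℝ) (a : Fin n → ℕ) : EuclideanSpace ℝ (Fin n) :=
  WithLp.toLp 2 fun j => (a j : ℝ) * h j

theorem grid_eq_image_gridPoint {h L : Fin n → ℝ} (hL : ∀ j, 0 ≤ L j) :
    grid h L = gridPoint h '' Fintype.piFinset fun j => Finset.range (⌊L j⌋₊ + 1) := by
  ext z
  simp only [grid, Set.mem_ofPred_eq, Set.mem_image, Finset.mem_coe, Fintype.mem_piFinset,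
    Finset.mem_range, Nat.lt_succ_iff]
  constructor
  · intro hz
    choose p hpL hpz using hz
    exact ⟨p, fun j => Nat.le_floor (hpL j), by ext j; simp [gridPoint, hpz]⟩
  · rintro ⟨a, ha, rfl⟩ j
    exact ⟨a j, (Nat.cast_le.2 (ha j)).trans (Nat.floor_le (hL j)), rfl⟩

theorem two_le_dist_gridPoint {h : Fin n → ℝ} (hh : ∀ j, 2 ≤ h j) {a b : Fin n → ℕ}
    (hab : a ≠ b) : 2 ≤ dist (gridPoint h a) (gridPoint h b) := by
  obtain ⟨j, hj⟩ := Function.ne_iff.1 hab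
  have hgap : (1 : ℝ) ≤ |(a j : ℝ) - b j| := by
    exact_mod_cast Int.one_le_abs (sub_ne_zero.2 (Int.natCast_inj.not.2 hj))
  calc (2 : ℝ) ≤ 1 * h j := by linarith [hh j]
    _ ≤ |(a j : ℝ) - b j| * h j := by gcongr; linarith [hh j]
    _ = dist (gridPoint h a j) (gridPoint h b j) := by
        simp [gridPoint, Real.dist_eq, ← sub_mul, abs_mul, abs_of_pos (two_pos.trans_le (hh j))]
    _ ≤ dist (gridPoint h a) (gridPoint h b) := PiLp.dist_apply_le _ _ j

theorem volume_iUnion_closedBall_grid {h L : Fin n → ℝ} (hh : ∀ j, 2 ≤ h j)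
    (hL : ∀ j, 1 ≤ L j) :
    ENNReal.ofReal ((∏ j, L j) * (volume (ball (0 : EuclideanSpace ℝ (Fin n)) 1)).toReal) ≤
        volume (⋃ z ∈ grid h L, closedBall z 1) ∧
      volume (⋃ z ∈ grid h L, closedBall z 1) ≤
        ENNReal.ofReal (2 ^ n * (∏ j, L j) *
          (volume (closedBall (0 : EuclideanSpace ℝ (Fin n)) 1)).toReal) := by
  set T := Fintype.piFinset fun j => Finset.range (⌊L j⌋₊ + 1)
  have hcard : (T.card : ℝ) = ∏ j, ((⌊L j⌋₊ : ℝ) + 1) := by simp [T, Fintype.card_piFinset]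
  have hunion : (⋃ z ∈ grid h L, closedBall z 1) = ⋃ a ∈ T, closedBall (gridPoint h a) 1 := by
    rw [grid_eq_image_gridPoint fun j => zero_le_one.trans (hL j), Set.biUnion_image]; rfl
  rw [hunion]
  constructor
  · refine le_trans ?_ (card_mul_le_measure_biUnion_closedBall volume T _
      fun a _ b _ hab => by simpa using two_le_dist_gridPoint hh hab)
    rw [ENNReal.ofReal_mul' ENNReal.toReal_nonneg, ENNReal.ofReal_toReal measure_ball_lt_top.ne]
    gcongr
    rw [← ENNReal.ofReal_natCast, hcard]
    exact ENNReal.ofReal_le_ofReal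
      (Finset.prod_le_prod_floor_add_one _ fun j _ => zero_le_one.trans (hL j))
  · refine (measure_biUnion_closedBall_le_card_mul volume T _ 1).trans ?_
    rw [ENNReal.ofReal_mul' ENNReal.toReal_nonneg,
      ENNReal.ofReal_toReal measure_closedBall_lt_top.ne]
    gcongr
    rw [← ENNReal.ofReal_natCast, hcard]
    refine ENNReal.ofReal_le_ofReal ?_
    simpa using Finset.prod_floor_add_one_le Finset.univ fun j _ => hL j

end Grid

theorem setOf_lattice_eq_grid {n : ℕ} (hn : 0 < n) (A B u v : ℝ) :
    {z : EuclideanSpace ℝ (Fin n) |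
        (∀ j : Fin n, (j : ℕ) < n - 1 → ∃ p : ℕ, (p : ℝ) ≤ A ∧ z j = p * u) ∧
        ∃ q : ℕ, (q : ℝ) ≤ B ∧ z ⟨n - 1, by omega⟩ = 2 * q * v} =
      grid (fun j => if (j : ℕ) < n - 1 then u else 2 * v)
        (fun j => if (j : ℕ) < n - 1 then A else B) := by
  ext z
  rw [grid, Set.mem_ofPred_eq, Set.mem_ofPred_eq]
  conv_rhs => rw [Fin.forall_iff_val_lt_sub_one_and hn]
  simp only [lt_irrefl, if_false]
  refine and_congr (forall₂_congr fun j hj => by simp only [hj, if_true]) ?_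
  exact exists_congr fun q => and_congr_right' (by rw [mul_assoc, mul_left_comm])

theorem one_le_mul_rpow_iff {δ c b : ℝ} (hδ : 0 < δ) : 1 ≤ c * δ ^ b ↔ δ ^ (-b) ≤ c := by
  rw [rpow_neg hδ.le, inv_le_iff_one_le_mul₀ (rpow_pos_of_pos hδ _)]

theorem prod_lattice_bounds_eq_mul_rpow {n : ℕ} (hn : 0 < n) {δ : ℝ} (hδ : 0 < δ) (σ : ℝ) :
    ∏ j : Fin n, (if (j : ℕ) < n - 1 then (1/40) * δ ^ (σ - 1) else (1/80) * δ ^ (2*σ - 1)) =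
      (1/40) ^ (n - 1) * (1/80) * δ ^ ((σ - 1) * ((n : ℝ) - 1) + 2*σ - 1) := by
  rw [Fin.prod_ite_val_lt_sub_one hn, add_sub_assoc, rpow_add hδ, rpow_mul hδ.le,
    ← Nat.cast_one, ← Nat.cast_sub hn, rpow_natCast]
  ring

theorem stmt7 (n : ℕ) (hn : 2 ≤ n) :
    ∃ c C : ℝ, 0 < c ∧ 0 < C ∧
      ∀ σ δ : ℝ, 0 < σ → σ < 1/2 → 0 < δ → δ < 1 →
        δ ^ σ ≤ 1/2 → δ ^ (1 - σ) ≤ 1/40 → δ ^ (1 - 2*σ) ≤ 1/80 →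
      ∀ Λ : Set (EuclideanSpace ℝ (Fin n)),
        Λ = {z : EuclideanSpace ℝ (Fin n) |
              (∀ j : Fin n, (j : ℕ) < n - 1 →
                ∃ p : ℕ, (p : ℝ) ≤ (1/40) * δ ^ (σ - 1) ∧ z j = (p : ℝ) * δ ^ (-σ)) ∧
              (∃ q : ℕ, (q : ℝ) ≤ (1/80) * δ ^ (2*σ - 1) ∧
                z ⟨n - 1, by omega⟩ = 2 * (q : ℝ) * δ ^ (-(2*σ)))} →
        ENNReal.ofReal (c * δ ^ ((σ - 1) * ((n : ℝ) - 1) + 2*σ - 1)) ≤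
            volume (⋃ z ∈ Λ, Metric.closedBall z 1) ∧
          volume (⋃ z ∈ Λ, Metric.closedBall z 1) ≤
            ENNReal.ofReal (C * δ ^ ((σ - 1) * ((n : ℝ) - 1) + 2*σ - 1)) := by
  have hωb : 0 < (volume (ball (0 : EuclideanSpace ℝ (Fin n)) 1)).toReal :=
    ENNReal.toReal_pos (measure_ball_pos _ _ one_pos).ne' measure_ball_lt_top.ne
  have hωc : 0 < (volume (closedBall (0 : EuclideanSpace ℝ (Fin n)) 1)).toReal :=
    ENNReal.toReal_pos (measure_closedBall_pos _ _ one_pos).ne' measure_closedBall_lt_top.ne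
  refine ⟨(1/40) ^ (n - 1) * (1/80) * (volume (ball (0 : EuclideanSpace ℝ (Fin n)) 1)).toReal,
    2 ^ n * (1/40) ^ (n - 1) * (1/80) *
      (volume (closedBall (0 : EuclideanSpace ℝ (Fin n)) 1)).toReal,
    by positivity, by positivity, ?_⟩
  intro σ δ hσ _ hδ hδ1 hσδ h40 h80 Λ rfl
  rw [setOf_lattice_eq_grid (by omega)]
  have hspacing : ∀ j : Fin n, 2 ≤ if (j : ℕ) < n - 1 then δ ^ (-σ) else 2 * δ ^ (-(2*σ)) := by
    intro j
    split_ifs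
    · rw [rpow_neg hδ.le, le_inv_comm₀ two_pos (rpow_pos_of_pos hδ σ)]
      linarith
    · linarith [one_le_rpow_of_pos_of_le_one_of_nonpos hδ hδ1.le (by linarith : -(2*σ) ≤ 0)]
  have hcount : ∀ j : Fin n,
      1 ≤ if (j : ℕ) < n - 1 then (1/40) * δ ^ (σ - 1) else (1/80) * δ ^ (2*σ - 1) := by
    intro j
    split_ifs <;> rwa [one_le_mul_rpow_iff hδ, neg_sub]
  have hvol := volume_iUnion_closedBall_grid hspacing hcount
  rw [prod_lattice_bounds_eq_mul_rpow (by omega) hδ] at hvol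
  constructor
  · convert hvol.1 using 2; ring
  · convert hvol.2 using 2; ring
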